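/- Let 0 < δ < 1 and define P(z) = (1 − δ/4)z² + (1 − δ/8)z + 1. Then P maps the half annulus D_δ = { z ∈ ℂ : δ ≤ |z| ≤ 1, Re(z) ≤ 0 } into the set R_ε with ε = (2/3)δ, where R_ε = { z ∈ ℂ : |z| ≤ 1 and ε ≤ |arg(z)| ≤ π − ε } ∪ { z ∈ ℂ : |z| ≤ 1 − ε/8 }; here arg(z) ∈ (−π, π] is the principal argument. That is, P(D_δ) ⊆ R_{(2/3)δ}. -/

import Mathlib

/-!
Write `z = x + iy`, `t = -x ∈ [0, 1]` and `r = |z|²`. Then `1 - |P(z)|²` is a sum of terms that are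
all nonnegative when `0 ≤ δ ≤ 1`, so `|P| ≤ 1` on the half disc. Where `|Im P(z)| ≥ 2δ/3`, this
gives `|sin (arg P(z))| = |Im P(z)| / |P(z)| ≥ 2δ/3`, and both angle bounds follow from `sin θ ≤ θ`.
Otherwise `1 - |P|² ≥ δ/6 - δ²/144 = 1 - (1 - δ/12)²`: for `t ≥ 1/3` from the same decomposition,
and for `t < 1/3` from `1 - |P|² ≥ (δ/4 - 5δ²/64) r + 2t P'(x)`. If moreover `t < δ/4`, then
`|y| ≥ √15 δ/4`, so `|Im P(z)| = |y P'(x)| < 2δ/3` forces `P'(x) ≤ 0.69`, which bounds `t` below.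
-/

open Real

/-- The quadratic `P(z) = (1 − δ/4)z² + (1 − δ/8)z + 1`. -/
noncomputable def Pquad (δ : ℝ) (z : ℂ) : ℂ :=
  (1 - (δ : ℂ) / 4) * z ^ 2 + (1 - (δ : ℂ) / 8) * z + 1

namespace Complex

lemma abs_im_le_sin_abs_arg {w : ℂ} (hw : ‖w‖ ≤ 1) : |w.im| ≤ Real.sin |arg w| := by
  rw [← abs_sin_eq_sin_abs_of_abs_le_pi (abs_arg_le_pi w), ← norm_mul_sin_arg w, abs_mul,
    abs_norm]
  exact mul_le_of_le_one_left (abs_nonneg _) hw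

lemma le_abs_arg_of_le_abs_im {w : ℂ} {ε : ℝ} (hw : ‖w‖ ≤ 1) (h : ε ≤ |w.im|) :
    ε ≤ |arg w| :=
  (h.trans (abs_im_le_sin_abs_arg hw)).trans (Real.sin_le (abs_nonneg _))

lemma abs_arg_le_pi_sub_of_le_abs_im {w : ℂ} {ε : ℝ} (hw : ‖w‖ ≤ 1) (h : ε ≤ |w.im|) :
    |arg w| ≤ π - ε := by
  have hsin := h.trans (abs_im_le_sin_abs_arg hw)
  rw [← Real.sin_pi_sub] at hsin
  linarith [Real.sin_le (sub_nonneg.2 (abs_arg_le_pi w))]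

end Complex

section
variable {δ : ℝ} {z : ℂ}

lemma Pquad_re :
    (Pquad δ z).re = (1 - δ / 4) * (z.re ^ 2 - z.im ^ 2) + (1 - δ / 8) * z.re + 1 := by
  simp [Pquad, pow_two]

-- The second factor is `P'(Re z)`.
lemma Pquad_im : (Pquad δ z).im = z.im * (2 * (1 - δ / 4) * z.re + (1 - δ / 8)) := by
  simp [Pquad, pow_two]
  ring

lemma one_sub_normSq_Pquad :
    1 - Complex.normSq (Pquad δ z) =
      (1 - δ / 4) ^ 2 * (Complex.normSq z * (1 - Complex.normSq z))
      + z.im ^ 2 * ((δ / 4 - 5 * δ ^ 2 / 64) + 2 * ((1 - δ / 4) * (1 - δ / 8)) * -z.re)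
      + -z.re * (1 + z.re) * (δ / 4 - 3 * δ ^ 2 / 64)
      + (-z.re * (δ / 4 - δ ^ 2 / 64)
        + 2 * ((1 - δ / 4) * (1 - δ / 8)) * (-z.re * (1 + z.re) ^ 2)) := by
  rw [Complex.normSq_apply, Complex.normSq_apply, Pquad_re, Pquad_im]
  ring

lemma one_sub_normSq_Pquad' :
    1 - Complex.normSq (Pquad δ z) =
      (δ / 4 - 5 * δ ^ 2 / 64) * Complex.normSq z
      + (1 - δ / 4) ^ 2 * (Complex.normSq z * (1 - Complex.normSq z))
      + 2 * ((1 - δ / 4) * (1 - δ / 8)) * (-z.re * Complex.normSq z)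
      + 2 * (-z.re * (2 * (1 - δ / 4) * z.re + (1 - δ / 8))) := by
  rw [Complex.normSq_apply, Complex.normSq_apply, Pquad_re, Pquad_im]
  ring

lemma le_one_sub_normSq_Pquad (h0 : 0 ≤ δ) (h1 : δ ≤ 1) (hre : z.re ≤ 0) (hz : ‖z‖ ≤ 1) :
    -z.re * (δ / 4 - δ ^ 2 / 64) + 2 * ((1 - δ / 4) * (1 - δ / 8)) * (-z.re * (1 + z.re) ^ 2)
      ≤ 1 - Complex.normSq (Pquad δ z) := by
  have hr : Complex.normSq z ≤ 1 := by rw [← Complex.sq_norm]; exact pow_le_one₀ (norm_nonneg z) hz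
  have ht0 : 0 ≤ -z.re := neg_nonneg.2 hre
  have ht1 : 0 ≤ 1 + z.re := by linarith [neg_abs_le z.re, Complex.abs_re_le_norm z]
  have hc : 0 ≤ δ / 4 - 5 * δ ^ 2 / 64 := by nlinarith
  have hab : 0 ≤ 2 * ((1 - δ / 4) * (1 - δ / 8)) := by nlinarith
  have := one_sub_normSq_Pquad (δ := δ) (z := z)
  have := mul_nonneg (sq_nonneg (1 - δ / 4)) (mul_nonneg (Complex.normSq_nonneg z) (sub_nonneg.2 hr))
  have := mul_nonneg (sq_nonneg z.im) (add_nonneg hc (mul_nonneg hab ht0))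
  have := mul_nonneg (mul_nonneg ht0 ht1) (by nlinarith : 0 ≤ δ / 4 - 3 * δ ^ 2 / 64)
  linarith

lemma le_one_sub_normSq_Pquad' (h1 : δ ≤ 1) (hre : z.re ≤ 0) (hz : ‖z‖ ≤ 1) :
    (δ / 4 - 5 * δ ^ 2 / 64) * Complex.normSq z
      + 2 * (-z.re * (2 * (1 - δ / 4) * z.re + (1 - δ / 8)))
      ≤ 1 - Complex.normSq (Pquad δ z) := by
  have hr : Complex.normSq z ≤ 1 := by rw [← Complex.sq_norm]; exact pow_le_one₀ (norm_nonneg z) hz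
  have hab : 0 ≤ 2 * ((1 - δ / 4) * (1 - δ / 8)) := by nlinarith
  have := one_sub_normSq_Pquad' (δ := δ) (z := z)
  have := mul_nonneg (sq_nonneg (1 - δ / 4)) (mul_nonneg (Complex.normSq_nonneg z) (sub_nonneg.2 hr))
  have := mul_nonneg hab (mul_nonneg (neg_nonneg.2 hre) (Complex.normSq_nonneg z))
  linarith

lemma normSq_Pquad_le_one (h0 : 0 ≤ δ) (h1 : δ ≤ 1) (hre : z.re ≤ 0) (hz : ‖z‖ ≤ 1) :
    Complex.normSq (Pquad δ z) ≤ 1 := by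
  have ht0 : 0 ≤ -z.re := neg_nonneg.2 hre
  have := le_one_sub_normSq_Pquad h0 h1 hre hz
  have := mul_nonneg ht0 (by nlinarith : 0 ≤ δ / 4 - δ ^ 2 / 64)
  have := mul_nonneg (by nlinarith : 0 ≤ 2 * ((1 - δ / 4) * (1 - δ / 8)))
    (mul_nonneg ht0 (sq_nonneg (1 + z.re)))
  linarith

lemma normSq_Pquad_le_of_third_le_neg_re (h0 : 0 ≤ δ) (h1 : δ ≤ 1) (hz : ‖z‖ ≤ 1)
    (ht : 1 / 3 ≤ -z.re) : Complex.normSq (Pquad δ z) ≤ (1 - δ / 12) ^ 2 := by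
  have ht1 : 0 ≤ 1 + z.re := by linarith [neg_abs_le z.re, Complex.abs_re_le_norm z]
  have := le_one_sub_normSq_Pquad h0 h1 (by linarith) hz
  have : δ / 6 - δ ^ 2 / 144 ≤ -z.re * (δ / 4 - δ ^ 2 / 64)
      + 2 * ((1 - δ / 4) * (1 - δ / 8)) * (-z.re * (1 + z.re) ^ 2) := by
    nlinarith [mul_nonneg ht1 (sq_nonneg (1 + z.re)),
      mul_nonneg (sub_nonneg.2 ht) (sq_nonneg (1 + z.re)),
      mul_nonneg (mul_nonneg h0 (sub_nonneg.2 ht)) (sq_nonneg (1 + z.re)),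
      mul_nonneg h0 ht1, sq_nonneg (1 + z.re - δ / 4)]
  nlinarith

lemma normSq_Pquad_le_of_neg_re_lt_third (h0 : 0 < δ) (h1 : δ ≤ 1) (hre : z.re ≤ 0)
    (hδz : δ ≤ ‖z‖) (hz : ‖z‖ ≤ 1) (ht : -z.re < 1 / 3) (him : |(Pquad δ z).im| ≤ 2 / 3 * δ) :
    Complex.normSq (Pquad δ z) ≤ (1 - δ / 12) ^ 2 := by
  have hlow := le_one_sub_normSq_Pquad' h1 hre hz
  have hr : δ ^ 2 ≤ Complex.normSq z := by
    rw [← Complex.sq_norm]; exact pow_le_pow_left₀ h0.le hδz 2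
  have hc : 0 ≤ δ / 4 - 5 * δ ^ 2 / 64 := by nlinarith
  have hcr := mul_le_mul_of_nonneg_left hr hc
  set m := 2 * (1 - δ / 4) * z.re + (1 - δ / 8) with hm
  rcases le_or_gt (δ / 4) (-z.re) with hδt | htδ
  · have hm3 : 1 / 3 + δ / 24 ≤ m := by nlinarith
    nlinarith [mul_nonneg (sub_nonneg.2 hδt) (sub_nonneg.2 hm3)]
  · have hm0 : 1 - 5 * δ / 8 ≤ m := by nlinarith
    have hy : 15 * δ ^ 2 / 16 ≤ z.im ^ 2 := by
      rw [Complex.normSq_apply] at hr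
      nlinarith [mul_nonneg (neg_nonneg.2 hre) (by linarith : 0 ≤ δ / 4 + z.re)]
    have hym : z.im ^ 2 * m ^ 2 ≤ 4 * δ ^ 2 / 9 := by
      rw [← mul_pow, ← Pquad_im, ← sq_abs]
      nlinarith [abs_nonneg (Pquad δ z).im]
    have hm_sq : m ^ 2 ≤ 64 / 135 := by
      have := mul_le_mul_of_nonneg_right hy (sq_nonneg m)
      nlinarith [mul_pos h0 h0]
    have hm_le : m ≤ 69 / 100 := by nlinarith
    have ht_ge : 31 / 100 - δ / 8 ≤ 2 * -z.re := by
      nlinarith [mul_nonneg h0.le (neg_nonneg.2 hre)]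
    have htm := mul_le_mul ht_ge hm0 (by linarith) (by linarith)
    nlinarith [mul_pos h0 h0, mul_nonneg (mul_nonneg h0.le h0.le) h0.le,
      mul_nonneg (mul_nonneg h0.le h0.le) (by linarith : (0:ℝ) ≤ 1 - δ)]

lemma norm_Pquad_le_one (h0 : 0 ≤ δ) (h1 : δ ≤ 1) (hre : z.re ≤ 0) (hz : ‖z‖ ≤ 1) :
    ‖Pquad δ z‖ ≤ 1 := by
  rw [← sq_le_one_iff₀ (norm_nonneg _), Complex.sq_norm]
  exact normSq_Pquad_le_one h0 h1 hre hz

lemma norm_Pquad_le_of_abs_im_le (h0 : 0 < δ) (h1 : δ ≤ 1) (hre : z.re ≤ 0)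
    (hδz : δ ≤ ‖z‖) (hz : ‖z‖ ≤ 1) (him : |(Pquad δ z).im| ≤ 2 / 3 * δ) :
    ‖Pquad δ z‖ ≤ 1 - δ / 12 := by
  rw [← sq_le_sq₀ (norm_nonneg _) (by linarith), Complex.sq_norm]
  rcases le_or_gt (1 / 3) (-z.re) with ht | ht
  · exact normSq_Pquad_le_of_third_le_neg_re h0.le h1 hz ht
  · exact normSq_Pquad_le_of_neg_re_lt_third h0 h1 hre hδz hz ht him

end

/-- For `0 < δ < 1`, the quadratic `P` maps the half annulus
`D_δ = {z : δ ≤ |z| ≤ 1, Re z ≤ 0}` into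
`R_ε = {z : |z| ≤ 1, ε ≤ |arg z| ≤ π − ε} ∪ {z : |z| ≤ 1 − ε/8}` with `ε = (2/3)δ`. -/
theorem quad_maps_halfannulus (δ : ℝ) (hδ0 : 0 < δ) (hδ1 : δ < 1) :
    ∀ z : ℂ, δ ≤ ‖z‖ → ‖z‖ ≤ 1 → z.re ≤ 0 →
      (‖Pquad δ z‖ ≤ 1 ∧
        (2 / 3) * δ ≤ |Complex.arg (Pquad δ z)| ∧
        |Complex.arg (Pquad δ z)| ≤ π - (2 / 3) * δ) ∨
      ‖Pquad δ z‖ ≤ 1 - ((2 / 3) * δ) / 8 := by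
  intro z hδz hz hre
  have hP := norm_Pquad_le_one hδ0.le hδ1.le hre hz
  by_cases him : 2 / 3 * δ ≤ |(Pquad δ z).im|
  · exact Or.inl ⟨hP, Complex.le_abs_arg_of_le_abs_im hP him,
      Complex.abs_arg_le_pi_sub_of_le_abs_im hP him⟩
  · right
    have := norm_Pquad_le_of_abs_im_le hδ0 hδ1.le hre hδz hz (not_le.1 him).le
    linarith
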